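/- Let n be a positive integer and let f : ℝ² → ℂ. Define I_n^* f(x) := Σ_{k ∈ X_n^*} f(k/(2n)) · Φ_n^*(x − k/(2n)). Then for every j ∈ X_n^*: (i) if |j₁| < n and |j₂| < n, then I_n^* f(j/(2n)) = f(j/(2n)); (ii) if exactly one of |j₁|, |j₂| equals n, then I_n^* f(j/(2n)) = f(j/(2n)) + f(j'/(2n)), where j' is the unique element of X_n^* with j' ≠ j and j' − j ∈ 2nℤ² (namely j' = j ± (2n,0) or j' = j ± (0,2n)); (iii) if |j₁| = |j₂| = n, then I_n^* f(j/(2n)) = f((n,n)/(2n)) + f((−n,n)/(2n)) + f((n,−n)/(2n)) + f((−n,−n)/(2n)). -/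

import Mathlib

open MeasureTheory Complex

attribute [local instance] Classical.propDecidable

/-- The exponential e_k(x) = exp(2 pi i (k1 x1 + k2 x2)). -/
noncomputable def e2 (k : ℤ × ℤ) (x : ℝ × ℝ) : ℂ :=
  Complex.exp (2 * Real.pi * Complex.I * ((k.1 : ℂ) * x.1 + (k.2 : ℂ) * x.2))

/-- The point k/(2n) in the plane. -/
noncomputable def pt2 (n : ℕ) (k : ℤ × ℤ) : ℝ × ℝ :=
  ((k.1 : ℝ) / (2 * n), (k.2 : ℝ) / (2 * n))

/-- Λ_m^* = {j : |j1+j2| ≤ m and |j1-j2| ≤ m}. -/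
noncomputable def LamStar (m : ℕ) : Finset (ℤ × ℤ) :=
  (Finset.Icc (-(m : ℤ), -(m : ℤ)) ((m : ℤ), (m : ℤ))).filter
    fun j => |j.1 + j.2| ≤ (m : ℤ) ∧ |j.1 - j.2| ≤ (m : ℤ)

/-- X_n^* = {k : k1 ≡ k2 (mod 2), |k_i| ≤ n}. -/
noncomputable def X2star (n : ℕ) : Finset (ℤ × ℤ) :=
  (Finset.Icc (-(n : ℤ), -(n : ℤ)) ((n : ℤ), (n : ℤ))).filter
    fun k => k.1 % 2 = k.2 % 2

/-- The weight c̃_ν on Λ_n^*. -/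
noncomputable def ctilde (n : ℕ) (ν : ℤ × ℤ) : ℝ :=
  if |ν.1 + ν.2| < (n : ℤ) ∧ |ν.1 - ν.2| < (n : ℤ) then 1
  else if |ν.1 + ν.2| = (n : ℤ) ∧ |ν.1 - ν.2| = (n : ℤ) then 1/4
  else 1/2

/-- Φ_n^*(x) = (1/(2n²)) Σ_{ν ∈ Λ_n^*} c̃_ν e_ν(x). -/
noncomputable def PhiStar (n : ℕ) (x : ℝ × ℝ) : ℂ :=
  (1 / (2 * (n : ℂ) ^ 2)) * ∑ ν ∈ LamStar n, (ctilde n ν : ℂ) * e2 ν x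

/-- I_n^* f(x) = Σ_{k ∈ X_n^*} f(k/(2n)) Φ_n^*(x - k/(2n)). -/
noncomputable def Istar2 (n : ℕ) (f : ℝ × ℝ → ℂ) (x : ℝ × ℝ) : ℂ :=
  ∑ k ∈ X2star n, f (pt2 n k) * PhiStar n (x - pt2 n k)

/-!
Substituting `u = ν₁ + ν₂`, `v = ν₁ - ν₂` identifies `Λ_n^*` with the pairs `(u, v) ∈ [-n, n]²`
of equal parity, and `c̃_ν` factors as `w(u) w(v)` for the trapezoidal weight `w` (`1/2` at
`±n`, `1` inside). Writing the parity condition as `(1 + (-1)^(u+v)) / 2`, the value of `Φ_n^*`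
at a node `d/(2n)` becomes a combination of products of one-dimensional trapezoidal sums over
`2n`-th roots of unity, each of which is `2n` or `0`; the upshot is `Φ_n^*(d/(2n)) = 1` if
`d ∈ 2nℤ²` and `0` otherwise. So `I_n^* f(j/(2n))` sums `f` over the nodes of `X_n^*` congruent
to `j` modulo `2n`: a product of one-dimensional classes, `{t}` for `|t| < n` and `{n, -n}` for
`|t| = n`.
-/

open Finset

theorem sum_Ioc_zpow_of_pow_eq_one {K : Type*} [Field K] {ζ : K} {m : ℕ} (hζ : ζ ^ m = 1)
    (a : ℤ) : ∑ u ∈ Ioc a (a + m), ζ ^ u = if ζ = 1 then (m : K) else 0 := by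
  split_ifs with h1
  · simp [h1]
  rcases m.eq_zero_or_pos with rfl | hm
  · simp
  have hζ0 : ζ ≠ 0 := by rintro rfl; simp [hm.ne'] at hζ
  rw [Int.Ioc_eq_finset_map, sum_map]
  simp only [Function.Embedding.trans_apply, Nat.castEmbedding_apply, addLeftEmbedding_apply,
    zpow_add₀ hζ0, zpow_natCast, ← mul_sum, add_sub_cancel_left, Int.toNat_natCast,
    geom_sum_eq h1, hζ, sub_self, zero_div, mul_zero]

theorem sum_filter_emod_two_eq {K : Type*} [Field K] [NeZero (2 : K)] (S T : Finset ℤ)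
    (f g : ℤ → K) :
    ∑ p ∈ (S ×ˢ T).filter (fun p => p.1 % 2 = p.2 % 2), f p.1 * g p.2
      = ((∑ u ∈ S, f u) * ∑ v ∈ T, g v
          + (∑ u ∈ S, (-1) ^ u * f u) * ∑ v ∈ T, (-1) ^ v * g v) / 2 := by
  have hind : ∀ u v : ℤ,
      (if u % 2 = v % 2 then (1 : K) else 0) = (1 + (-1) ^ u * (-1) ^ v) / 2 := by
    intro u v
    rw [neg_one_zpow_eq_ite, neg_one_zpow_eq_ite]
    rcases Int.emod_two_eq_zero_or_one u with hu | hu <;>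
      rcases Int.emod_two_eq_zero_or_one v with hv | hv <;>
      simp [Int.even_iff, hu, hv]
  rw [sum_filter, sum_mul_sum, sum_mul_sum, ← sum_product', ← sum_product', ← sum_add_distrib,
    sum_div]
  refine sum_congr rfl fun p _ => ?_
  rw [← boole_mul, hind]
  ring

theorem dvd_iff_of_abs_le {m x : ℤ} (hx : |x| ≤ m) : m ∣ x ↔ x = 0 ∨ x = m ∨ x = -m := by
  constructor
  · intro h
    rcases hx.lt_or_eq with hlt | heq
    · exact Or.inl (Int.eq_zero_of_abs_lt_dvd h hlt)
    · exact Or.inr ((abs_eq ((abs_nonneg x).trans hx)).mp heq)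
  · rintro (rfl | rfl | rfl) <;> simp

theorem dvd_add_and_dvd_sub_iff {m a b : ℤ} :
    2 * m ∣ a + b ∧ 2 * m ∣ a - b ↔ (2 * m ∣ a ∧ 2 * m ∣ b) ∨ (2 * m ∣ a + m ∧ 2 * m ∣ b + m) := by
  constructor
  · rintro ⟨⟨p, hp⟩, ⟨q, hq⟩⟩
    have ha : a = m * (p + q) := by linarith
    have hb : b = m * (p - q) := by linarith
    rcases Int.even_or_odd (p + q) with ⟨r, hr⟩ | ⟨r, hr⟩
    · exact Or.inl ⟨⟨r, by rw [ha, hr]; ring⟩, ⟨r - q, by rw [hb]; linear_combination m * hr⟩⟩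
    · exact Or.inr ⟨⟨r + 1, by rw [ha, hr]; ring⟩,
        ⟨r + 1 - q, by rw [hb]; linear_combination m * hr⟩⟩
  · rintro (⟨⟨p, hp⟩, ⟨q, hq⟩⟩ | ⟨⟨p, hp⟩, ⟨q, hq⟩⟩)
    · exact ⟨⟨p + q, by rw [hp, hq]; ring⟩, ⟨p - q, by rw [hp, hq]; ring⟩⟩
    · exact ⟨⟨p + q - 1, by linear_combination hp + hq⟩, ⟨p - q, by linear_combination hp - hq⟩⟩

theorem not_dvd_and_dvd_add_self {m a : ℤ} (hm : m ≠ 0) : ¬ (2 * m ∣ a ∧ 2 * m ∣ a + m) := by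
  rintro ⟨⟨p, hp⟩, ⟨q, hq⟩⟩
  have : m * (2 * (q - p) - 1) = 0 := by linear_combination hp - hq
  rcases mul_eq_zero.mp this with h | h
  · exact hm h
  · omega

noncomputable def endWeight (n : ℕ) (u : ℤ) : ℝ := if |u| = n then 1 / 2 else 1

theorem sum_Icc_endWeight_mul_zpow {n : ℕ} (hn : 0 < n) {ζ : ℂ} (hζ : ζ ^ (2 * n) = 1) :
    ∑ u ∈ Icc (-(n : ℤ)) n, (endWeight n u : ℂ) * ζ ^ u = ∑ u ∈ Ioc (-(n : ℤ)) n, ζ ^ u := by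
  have hsym : ζ ^ (-(n : ℤ)) = ζ ^ (n : ℤ) := by
    rw [zpow_neg, zpow_natCast]
    exact inv_eq_of_mul_eq_one_right (by rw [← pow_add, ← two_mul, hζ])
  have hint : ∀ u ∈ Ioo (-(n : ℤ)) n, (endWeight n u : ℂ) * ζ ^ u = ζ ^ u := fun u hu => by
    rw [mem_Ioo] at hu
    rw [endWeight, if_neg (by rw [abs_eq (by positivity)]; omega), ofReal_one, one_mul]
  rw [Icc_eq_cons_Ioc (by omega), sum_cons, Ioc_eq_cons_Ioo (by omega), sum_cons, sum_cons,
    sum_congr rfl hint, endWeight, endWeight, if_pos (by simp), if_pos (by simp), hsym]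
  push_cast
  ring

theorem sum_Icc_endWeight_mul_primitiveRoot_zpow {n : ℕ} (hn : 0 < n) {ω : ℂ}
    (hω : IsPrimitiveRoot ω (2 * n)) (c : ℤ) :
    ∑ u ∈ Icc (-(n : ℤ)) n, (endWeight n u : ℂ) * (ω ^ c) ^ u
      = if (2 * n : ℤ) ∣ c then 2 * (n : ℂ) else 0 := by
  have hpow : (ω ^ c) ^ (2 * n) = 1 := by
    rw [← zpow_natCast, ← zpow_mul, mul_comm, zpow_mul, zpow_natCast, hω.pow_eq_one, one_zpow]
  have hIoc := sum_Ioc_zpow_of_pow_eq_one hpow (-(n : ℤ))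
  rw [show -(n : ℤ) + (2 * n : ℕ) = n by push_cast; ring] at hIoc
  rw [sum_Icc_endWeight_mul_zpow hn hpow, hIoc, hω.zpow_eq_one_iff_dvd]
  push_cast
  rfl

theorem ctilde_eq_endWeight_mul {n : ℕ} {ν : ℤ × ℤ} (hν : ν ∈ LamStar n) :
    ctilde n ν = endWeight n (ν.1 + ν.2) * endWeight n (ν.1 - ν.2) := by
  obtain ⟨-, hs, hd⟩ := mem_filter.mp hν
  unfold ctilde endWeight
  rcases hs.lt_or_eq with hs | hs <;> rcases hd.lt_or_eq with hd | hd <;>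
    norm_num [hs, hd, LT.lt.ne]

theorem sum_LamStar_comp_rotate {M : Type*} [AddCommMonoid M] (n : ℕ) (g : ℤ × ℤ → M) :
    ∑ ν ∈ LamStar n, g (ν.1 + ν.2, ν.1 - ν.2)
      = ∑ p ∈ (Icc (-(n : ℤ)) n ×ˢ Icc (-(n : ℤ)) n).filter (fun p => p.1 % 2 = p.2 % 2),
          g p := by
  refine sum_nbij' (fun ν => (ν.1 + ν.2, ν.1 - ν.2))
    (fun p => ((p.1 + p.2) / 2, (p.1 - p.2) / 2)) ?_ ?_ ?_ ?_ fun _ _ => rfl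
  all_goals
    intro ν hν
    simp only [LamStar, mem_filter, mem_product, mem_Icc, Prod.le_def, abs_le, Prod.ext_iff]
      at hν ⊢
    omega

open Real in
theorem e2_pt2 {n : ℕ} (hn : 0 < n) (k d : ℤ × ℤ) :
    e2 k (pt2 n d) = exp (2 * π * I / (2 * n : ℕ)) ^ (k.1 * d.1 + k.2 * d.2) := by
  have hn' : (n : ℂ) ≠ 0 := by exact_mod_cast hn.ne'
  rw [← exp_int_mul, e2, pt2]
  congr 1
  push_cast
  field_simp

open Real in
theorem ctilde_mul_e2_pt2 {n : ℕ} (hn : 0 < n) {ν : ℤ × ℤ} (hν : ν ∈ LamStar n) (a b : ℤ) :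
    (ctilde n ν : ℂ) * e2 ν (pt2 n (a + b, a - b))
      = (endWeight n (ν.1 + ν.2) * (exp (2 * π * I / (2 * n : ℕ)) ^ a) ^ (ν.1 + ν.2))
        * (endWeight n (ν.1 - ν.2) * (exp (2 * π * I / (2 * n : ℕ)) ^ b) ^ (ν.1 - ν.2)) := by
  rw [ctilde_eq_endWeight_mul hν, e2_pt2 hn, ← zpow_mul, ← zpow_mul,
    show ν.1 * (a + b) + ν.2 * (a - b) = a * (ν.1 + ν.2) + b * (ν.1 - ν.2) by ring,
    zpow_add₀ (Complex.exp_ne_zero _)]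
  push_cast
  ring

open Real in
theorem PhiStar_pt2 {n : ℕ} (hn : 0 < n) {d : ℤ × ℤ} (hd : d.1 % 2 = d.2 % 2) :
    PhiStar n (pt2 n d) = if 2 * (n : ℤ) ∣ d.1 ∧ 2 * (n : ℤ) ∣ d.2 then 1 else 0 := by
  obtain ⟨a, b, rfl⟩ : ∃ a b : ℤ, d = (a + b, a - b) :=
    ⟨(d.1 + d.2) / 2, (d.1 - d.2) / 2, Prod.ext (by simp; omega) (by simp; omega)⟩
  set ω := exp (2 * π * I / (2 * n : ℕ))
  have hω : IsPrimitiveRoot ω (2 * n) := isPrimitiveRoot_exp _ (by omega)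
  have hωn : ω ^ (n : ℤ) = -1 := by
    rw [zpow_natCast]
    exact (hω.pow (by omega) (mul_comm 2 n)).eq_neg_one_of_two_right
  have hsign : ∀ c u : ℤ, (-1) ^ u * ((endWeight n u : ℂ) * (ω ^ c) ^ u)
      = endWeight n u * (ω ^ (c + n)) ^ u := by
    intro c u
    rw [zpow_add₀ (hω.ne_zero (by omega)), hωn, mul_zpow]
    ring
  have hn' : (n : ℂ) ≠ 0 := by exact_mod_cast hn.ne'
  simp only [PhiStar, sum_congr rfl fun ν hν => ctilde_mul_e2_pt2 hn hν a b]
  rw [sum_LamStar_comp_rotate n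
      (fun p => (endWeight n p.1 * (ω ^ a) ^ p.1 : ℂ) * (endWeight n p.2 * (ω ^ b) ^ p.2)),
    sum_filter_emod_two_eq _ _ (fun u => (endWeight n u : ℂ) * (ω ^ a) ^ u)
      (fun v => (endWeight n v : ℂ) * (ω ^ b) ^ v), sum_congr rfl fun u _ => hsign a u,
    sum_congr rfl fun u _ => hsign b u]
  simp only [sum_Icc_endWeight_mul_primitiveRoot_zpow hn hω, ite_zero_mul_ite_zero,
    dvd_add_and_dvd_sub_iff]
  have hexcl := not_dvd_and_dvd_add_self (m := (n : ℤ)) (a := a) (by omega)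
  split_ifs with h₁ h₂ h₃
  · exact absurd ⟨h₁.1, h₂.1⟩ hexcl
  all_goals first | (exfalso; tauto) | (field_simp; ring)

noncomputable def aliasNodes (n : ℕ) (t : ℤ) : Finset ℤ :=
  (Icc (-(n : ℤ)) n).filter fun s => 2 * (n : ℤ) ∣ t - s

theorem aliasNodes_eq_filter {n : ℕ} {t : ℤ} (ht : |t| ≤ n) :
    aliasNodes n t
      = (Icc (-(n : ℤ)) n).filter fun s => t - s = 0 ∨ t - s = 2 * n ∨ t - s = -(2 * n) :=
  filter_congr fun s hs => dvd_iff_of_abs_le <| by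
    rw [mem_Icc] at hs
    rw [abs_le] at ht ⊢
    omega

theorem aliasNodes_of_abs_lt {n : ℕ} {t : ℤ} (ht : |t| < n) : aliasNodes n t = {t} := by
  rw [aliasNodes_eq_filter ht.le]
  ext s
  rw [abs_lt] at ht
  simp only [mem_filter, mem_Icc, mem_singleton]
  omega

theorem aliasNodes_of_abs_eq {n : ℕ} {t : ℤ} (ht : |t| = n) :
    aliasNodes n t = {(n : ℤ), -(n : ℤ)} := by
  rw [aliasNodes_eq_filter ht.le]
  ext s
  rw [abs_eq (by omega)] at ht
  simp only [mem_filter, mem_Icc, mem_insert, mem_singleton]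
  omega

theorem filter_dvd_sub_X2star {n : ℕ} {j : ℤ × ℤ} (hj : j ∈ X2star n) :
    (X2star n).filter (fun k => 2 * (n : ℤ) ∣ j.1 - k.1 ∧ 2 * (n : ℤ) ∣ j.2 - k.2)
      = aliasNodes n j.1 ×ˢ aliasNodes n j.2 := by
  ext k
  simp only [X2star, aliasNodes, mem_filter, mem_product, mem_Icc, Prod.le_def] at hj ⊢
  constructor
  · rintro ⟨⟨hk, -⟩, h1, h2⟩
    exact ⟨⟨⟨hk.1.1, hk.2.1⟩, h1⟩, ⟨hk.1.2, hk.2.2⟩, h2⟩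
  · rintro ⟨⟨hk1, h1⟩, hk2, h2⟩
    have hpar1 := (dvd_mul_right 2 (n : ℤ)).trans h1
    have hpar2 := (dvd_mul_right 2 (n : ℤ)).trans h2
    exact ⟨⟨⟨⟨hk1.1, hk2.1⟩, hk1.2, hk2.2⟩, by omega⟩, h1, h2⟩

theorem pt2_sub (n : ℕ) (j k : ℤ × ℤ) : pt2 n j - pt2 n k = pt2 n (j - k) := by
  ext <;> simp [pt2, sub_div]

theorem Istar2_pt2 {n : ℕ} (hn : 0 < n) (f : ℝ × ℝ → ℂ) {j : ℤ × ℤ} (hj : j ∈ X2star n) :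
    Istar2 n f (pt2 n j) = ∑ k ∈ aliasNodes n j.1 ×ˢ aliasNodes n j.2, f (pt2 n k) := by
  rw [← filter_dvd_sub_X2star hj, sum_filter, Istar2]
  refine sum_congr rfl fun k hk => ?_
  have hpar : (j - k).1 % 2 = (j - k).2 % 2 := by
    simp only [X2star, mem_filter, Prod.fst_sub, Prod.snd_sub] at hj hk ⊢
    omega
  rw [pt2_sub, PhiStar_pt2 hn hpar, mul_ite, mul_one, mul_zero]
  rfl

theorem aliasNodes_product_eq_pair {n : ℕ} (hn : 0 < n) {j j' : ℤ × ℤ} (hj : j ∈ X2star n)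
    (hedge : (|j.1| = n ∧ |j.2| < n) ∨ (|j.1| < n ∧ |j.2| = n)) (hj' : j' ∈ X2star n)
    (hne : j' ≠ j) (hd1 : 2 * (n : ℤ) ∣ j'.1 - j.1) (hd2 : 2 * (n : ℤ) ∣ j'.2 - j.2) :
    aliasNodes n j.1 ×ˢ aliasNodes n j.2 = {j, j'} := by
  have hpair : #({(n : ℤ), -(n : ℤ)} : Finset ℤ) = 2 := card_pair (by omega)
  have hcard : #(aliasNodes n j.1 ×ˢ aliasNodes n j.2) = 2 := by
    rcases hedge with ⟨h1, h2⟩ | ⟨h1, h2⟩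
    · rw [card_product, aliasNodes_of_abs_eq h1, aliasNodes_of_abs_lt h2, hpair, card_singleton]
    · rw [card_product, aliasNodes_of_abs_lt h1, aliasNodes_of_abs_eq h2, hpair, card_singleton]
  refine (eq_of_subset_of_card_le ?_ (by rw [hcard, card_pair hne.symm])).symm
  rw [← filter_dvd_sub_X2star hj, insert_subset_iff, singleton_subset_iff, mem_filter, mem_filter]
  exact ⟨⟨hj, by simp⟩, hj', dvd_sub_comm.mp hd1, dvd_sub_comm.mp hd2⟩

theorem symmetric_trig_interpolation_2d (n : ℕ) (hn : 0 < n) (f : ℝ × ℝ → ℂ)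
    (j : ℤ × ℤ) (hj : j ∈ X2star n) :
    (|j.1| < (n : ℤ) ∧ |j.2| < (n : ℤ) → Istar2 n f (pt2 n j) = f (pt2 n j)) ∧
    (((|j.1| = (n : ℤ) ∧ |j.2| < (n : ℤ)) ∨ (|j.1| < (n : ℤ) ∧ |j.2| = (n : ℤ))) →
      ∀ j' ∈ X2star n, j' ≠ j →
        (2 * (n : ℤ)) ∣ j'.1 - j.1 → (2 * (n : ℤ)) ∣ j'.2 - j.2 →
          Istar2 n f (pt2 n j) = f (pt2 n j) + f (pt2 n j')) ∧
    (|j.1| = (n : ℤ) ∧ |j.2| = (n : ℤ) →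
      Istar2 n f (pt2 n j)
        = f (pt2 n ((n : ℤ), (n : ℤ))) + f (pt2 n (-(n : ℤ), (n : ℤ)))
          + f (pt2 n ((n : ℤ), -(n : ℤ))) + f (pt2 n (-(n : ℤ), -(n : ℤ)))) := by
  rw [Istar2_pt2 hn f hj]
  refine ⟨?_, fun hedge j' hj' hne hd1 hd2 => ?_, ?_⟩
  · rintro ⟨h1, h2⟩
    rw [aliasNodes_of_abs_lt h1, aliasNodes_of_abs_lt h2, singleton_product_singleton,
      sum_singleton]
  · rw [aliasNodes_product_eq_pair hn hj hedge hj' hne hd1 hd2, sum_pair hne.symm]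
  · rintro ⟨h1, h2⟩
    have hne : (n : ℤ) ≠ -n := by omega
    rw [aliasNodes_of_abs_eq h1, aliasNodes_of_abs_eq h2, sum_product, sum_pair hne,
      sum_pair hne, sum_pair hne]
    ring
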